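/- For every K > 0 there is a constant C depending only on K such that for every real p with 1 ≤ p < ∞, every strictly increasing sequence λ : ℤ → ℝ with λ_n → ±∞ as n → ±∞ and λ_{n+1} − λ_n ≤ K for all n, and every f : ℤ → ℂ with finite trace norm ‖f‖_{W^1_p|Λ} < ∞, the piecewise linear interpolant Φ₁f is an admissible 1-extension of f and (∫_ℝ |(Φ₁f)(t)|^p dt + ∫_ℝ |G(t)|^p dt)^{1/p} ≤ C ‖f‖_{W^1_p|Λ}, where G is the a.e. derivative of Φ₁f given by G(x) = f[λ_n,λ_{n+1}] for x ∈ (λ_n,λ_{n+1}). -/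

import Mathlib

open MeasureTheory
open scoped ENNReal NNReal

/-- `lam` is a strictly increasing sequence tending to `-∞` at `-∞` and `+∞` at `+∞`. -/
def GoodSeq (lam : ℤ → ℝ) : Prop :=
  StrictMono lam ∧ Filter.Tendsto lam Filter.atBot Filter.atBot ∧
    Filter.Tendsto lam Filter.atTop Filter.atTop

/-- `F` is an admissible `r`-extension of `f : ℤ → ℂ`, with associated `r`-th derivative `G`:
`F` is `(r-1)` times continuously differentiable, `G` is locally integrable,
`F^{(r-1)}(b) - F^{(r-1)}(a) = ∫_a^b G` for all `a ≤ b`, and `F (lam n) = f n` for all `n`. -/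
def AdmissibleExt (r : ℕ) (lam : ℤ → ℝ) (f : ℤ → ℂ) (F G : ℝ → ℂ) : Prop :=
  ContDiff ℝ (r - 1 : ℕ) F ∧ MeasureTheory.LocallyIntegrable G volume ∧
  (∀ a b : ℝ, a ≤ b →
      iteratedDeriv (r - 1) F b - iteratedDeriv (r - 1) F a = ∫ t in a..b, G t) ∧
  (∀ n : ℤ, F (lam n) = f n)

/-- Homogeneous trace seminorm `‖f‖_{L^r_p|Λ}`, valued in `[0,∞]`. -/
noncomputable def traceL (r : ℕ) (p : ℝ) (lam : ℤ → ℝ) (f : ℤ → ℂ) : ℝ≥0∞ :=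
  ⨅ (F : ℝ → ℂ) (G : ℝ → ℂ) (_ : AdmissibleExt r lam f F G),
    (∫⁻ t, ENNReal.ofReal (‖G t‖ ^ p)) ^ (1 / p)

/-- Trace norm `‖f‖_{W^r_p|Λ}`, valued in `[0,∞]`. -/
noncomputable def traceW (r : ℕ) (p : ℝ) (lam : ℤ → ℝ) (f : ℤ → ℂ) : ℝ≥0∞ :=
  ⨅ (F : ℝ → ℂ) (G : ℝ → ℂ) (_ : AdmissibleExt r lam f F G),
    ((∫⁻ t, ENNReal.ofReal (‖F t‖ ^ p)) +
      (∫⁻ t, ENNReal.ofReal (‖G t‖ ^ p))) ^ (1 / p)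

/-- First order divided difference `f[λ_n, λ_{n+1}]`. -/
noncomputable def dd1 (lam : ℤ → ℝ) (f : ℤ → ℂ) (n : ℤ) : ℂ :=
  (f (n + 1) - f n) / ((lam (n + 1) - lam n : ℝ) : ℂ)

/-- Second order divided difference `f[λ_n, λ_{n+1}, λ_{n+2}]`. -/
noncomputable def dd2 (lam : ℤ → ℝ) (f : ℤ → ℂ) (n : ℤ) : ℂ :=
  (dd1 lam f (n + 1) - dd1 lam f n) / ((lam (n + 2) - lam n : ℝ) : ℂ)

/-- Divided difference `f[λ_n, …, λ_{n+k}]` of order `k`. -/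
noncomputable def ddiv (lam : ℤ → ℝ) (f : ℤ → ℂ) (n : ℤ) (k : ℕ) : ℂ :=
  ∑ i ∈ Finset.range (k + 1),
    f (n + (i : ℤ)) /
      ∏ j ∈ (Finset.range (k + 1)).erase i,
        ((lam (n + (i : ℤ)) - lam (n + (j : ℤ)) : ℝ) : ℂ)

/-- Divided difference of values `v` at (distinct) points `x`. -/
noncomputable def ddPts {m : ℕ} (x : Fin m → ℝ) (v : Fin m → ℂ) : ℂ :=
  ∑ i, v i / ∏ j ∈ Finset.univ.erase i, ((x i - x j : ℝ) : ℂ)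

/-- `F` is of class `W^r` on `[a,b]` with `r`-th derivative `G`. -/
def ClassW (r : ℕ) (a b : ℝ) (F G : ℝ → ℂ) : Prop :=
  ContDiffOn ℝ (r - 1 : ℕ) F (Set.Icc a b) ∧ MeasureTheory.IntegrableOn G (Set.Icc a b) ∧
  ∀ x y : ℝ, a ≤ x → x ≤ y → y ≤ b →
    iteratedDerivWithin (r - 1) F (Set.Icc a b) y -
      iteratedDerivWithin (r - 1) F (Set.Icc a b) x = ∫ t in x..y, G t

/-- `‖f‖_{eq,L}^p`, valued in `[0,∞]`. -/
noncomputable def eqLp (r : ℕ) (p : ℝ) (lam : ℤ → ℝ) (f : ℤ → ℂ) : ℝ≥0∞ :=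
  ∑' n : ℤ, ENNReal.ofReal ((lam (n + (r : ℤ)) - lam n) * ‖ddiv lam f n r‖ ^ p)

/-- `‖f‖_{eq,W}^p`, valued in `[0,∞]`. -/
noncomputable def eqWp (r : ℕ) (p : ℝ) (lam : ℤ → ℝ) (f : ℤ → ℂ) : ℝ≥0∞ :=
  eqLp r p lam f +
    ∑ j ∈ Finset.range r, ∑' n : ℤ,
      ENNReal.ofReal ((lam (n + (r : ℤ)) - lam n) ^ ((j : ℝ) * p + 1) *
        ‖ddiv lam f n j‖ ^ p)

/-- The cubic `q(x) = 4(x² - x³)`. -/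
noncomputable def qcub : ℝ → ℝ := fun x => 4 * (x ^ 2 - x ^ 3)

/-- `α_n(f) = (h_n f[λ_{n-1},λ_n] + h_{n-1} f[λ_n,λ_{n+1}])/(h_{n-1}+h_n)`. -/
noncomputable def alphaN (lam : ℤ → ℝ) (f : ℤ → ℂ) (n : ℤ) : ℂ :=
  (((lam (n + 1) - lam n : ℝ) : ℂ) * dd1 lam f (n - 1) +
      ((lam n - lam (n - 1) : ℝ) : ℂ) * dd1 lam f n) /
    ((lam (n + 1) - lam (n - 1) : ℝ) : ℂ)

/-- The formula for `Φ₁ f` on `[λ_n, λ_{n+1}]`. -/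
noncomputable def phi1P (lam : ℤ → ℝ) (f : ℤ → ℂ) (n : ℤ) (x : ℝ) : ℂ :=
  f n * (((lam (n + 1) - x) / (lam (n + 1) - lam n) : ℝ) : ℂ) +
    f (n + 1) * (((x - lam n) / (lam (n + 1) - lam n) : ℝ) : ℂ)

/-- The formula for `Φ₂ f` on `[μ_{n-1}, λ_n]`. -/
noncomputable def phi2L (lam : ℤ → ℝ) (f : ℤ → ℂ) (n : ℤ) (x : ℝ) : ℂ :=
  f n + alphaN lam f n * ((x - lam n : ℝ) : ℂ) +
    (((lam n - lam (n - 1)) ^ 2 : ℝ) : ℂ) * dd2 lam f (n - 1) *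
      ((qcub ((lam n - x) / (lam n - lam (n - 1))) : ℝ) : ℂ)

/-- The formula for `Φ₂ f` on `[λ_n, μ_n]`. -/
noncomputable def phi2R (lam : ℤ → ℝ) (f : ℤ → ℂ) (n : ℤ) (x : ℝ) : ℂ :=
  f n + alphaN lam f n * ((x - lam n : ℝ) : ℂ) +
    (((lam (n + 1) - lam n) ^ 2 : ℝ) : ℂ) * dd2 lam f (n - 1) *
      ((qcub ((x - lam n) / (lam (n + 1) - lam n)) : ℝ) : ℂ)

/-!
On a cell `[λ_n, λ_{n+1}]` of length `h ≤ K` the interpolant is affine, hence a primitive of the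
step function `G`, and bounded by `|f_n| + |f_{n+1}|`. Let `(F', G')` be any admissible extension.
Since `f_k = F'(λ_k)`, we have `|f_k| ≤ |F'(t)| + ∫_cell |G'|` for every `t` in the cell; taking
`p`-th powers, averaging over the cell and applying Hölder gives
`h |f_k|^p ≤ 2^(p-1) (‖F'‖_p^p + h^p ‖G'‖_p^p)` on the cell. Moreover `G'` has mean
`f[λ_n, λ_{n+1}]` on the cell, so Jensen gives `h |f[λ_n, λ_{n+1}]|^p ≤ ‖G'‖_p^p` there.
Summing over the cells yields the estimate with `C = 2 (K + 1)`.
-/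

open Set Filter Topology

namespace GoodSeq

variable {lam : ℤ → ℝ}

theorem exists_mem_Ioc (hg : GoodSeq lam) (x : ℝ) : ∃ n, x ∈ Ioc (lam n) (lam (n + 1)) := by
  obtain ⟨hmono, hbot, htop⟩ := hg
  have hne : {n : ℤ | lam n < x}.Nonempty := (hbot.eventually_lt_atBot x).exists
  have hbdd : BddAbove {n : ℤ | lam n < x} := by
    obtain ⟨N, hN⟩ := (htop.eventually_ge_atTop x).exists
    exact ⟨N, fun n hn => (hmono.lt_iff_lt.mp (hn.trans_le hN)).le⟩
  exact ⟨sSup {n | lam n < x}, Int.csSup_mem hne hbdd,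
    not_lt.mp fun h => (lt_add_one _).not_ge (le_csSup hbdd h)⟩

theorem iUnion_Ioc (hg : GoodSeq lam) : ⋃ n, Ioc (lam n) (lam (n + 1)) = univ :=
  eq_univ_of_forall fun x => mem_iUnion.mpr (hg.exists_mem_Ioc x)

theorem pairwise_disjoint_Ioc (hg : GoodSeq lam) :
    Pairwise (Function.onFun Disjoint fun n => Ioc (lam n) (lam (n + 1))) := by
  simpa [Order.succ_eq_add_one] using hg.1.monotone.pairwise_disjoint_on_Ioc_succ

theorem lintegral_eq_tsum (hg : GoodSeq lam) (φ : ℝ → ℝ≥0∞) :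
    ∫⁻ t, φ t = ∑' n, ∫⁻ t in Ioc (lam n) (lam (n + 1)), φ t := by
  rw [← setLIntegral_univ, ← hg.iUnion_Ioc,
    lintegral_iUnion (fun _ => measurableSet_Ioc) hg.pairwise_disjoint_Ioc]

end GoodSeq

theorem admissibleExt_one_iff {lam : ℤ → ℝ} {f : ℤ → ℂ} {F G : ℝ → ℂ} :
    AdmissibleExt 1 lam f F G ↔ Continuous F ∧ LocallyIntegrable G volume ∧
      (∀ a b, F b - F a = ∫ t in a..b, G t) ∧ ∀ n, F (lam n) = f n := by
  simp only [AdmissibleExt, Nat.sub_self, CharP.cast_eq_zero, contDiff_zero, iteratedDeriv_zero]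
  refine and_congr_right fun _ => and_congr_right fun _ => and_congr_left fun _ =>
    ⟨fun h a b => ?_, fun h a b _ => h a b⟩
  rcases le_total a b with hab | hba
  · exact h a b hab
  · rw [intervalIntegral.integral_symm, ← h b a hba, neg_sub]

theorem MeasureTheory.LocallyIntegrable.intervalIntegrable {E : Type*} [NormedAddCommGroup E]
    {G : ℝ → E} (hG : LocallyIntegrable G volume) (a b : ℝ) : IntervalIntegrable G volume a b :=
  (hG.integrableOn_isCompact isCompact_uIcc).intervalIntegrable

theorem continuous_of_sub_eq_integral {E : Type*} [NormedAddCommGroup E] [NormedSpace ℝ E]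
    {F G : ℝ → E} (hG : LocallyIntegrable G volume)
    (hFG : ∀ a b, F b - F a = ∫ t in a..b, G t) : Continuous F := by
  have hprim : (fun x => F 0 + ∫ t in (0 : ℝ)..x, G t) = F := by
    ext x
    rw [← hFG 0 x, add_sub_cancel]
  rw [← hprim]
  exact continuous_const.add (intervalIntegral.continuous_primitive hG.intervalIntegrable 0)

theorem GoodSeq.sub_eq_integral_of_forall_Icc {lam : ℤ → ℝ} {F G : ℝ → ℂ} (hg : GoodSeq lam)
    (hG : LocallyIntegrable G volume)
    (hcell : ∀ n, ∀ x ∈ Icc (lam n) (lam (n + 1)), F x - F (lam n) = ∫ t in lam n..x, G t)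
    (a b : ℝ) : F b - F a = ∫ t in a..b, G t := by
  set d : ℝ → ℂ := fun x => F x - ∫ t in lam 0..x, G t
  have hd_cell : ∀ n, ∀ x ∈ Icc (lam n) (lam (n + 1)), d x = d (lam n) := by
    intro n x hx
    have := intervalIntegral.integral_interval_sub_left (hG.intervalIntegrable (lam 0) x)
      (hG.intervalIntegrable (lam 0) (lam n))
    simp only [d]
    linear_combination hcell n x hx - this
  have hd_grid : ∀ n, d (lam n) = d (lam 0) := by
    intro n
    induction n using Int.induction_on with
    | zero => rfl
    | succ i ih => rw [hd_cell i _ ⟨(hg.1 (lt_add_one _)).le, le_rfl⟩, ih]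
    | pred i ih =>
      have := hd_cell (-i - 1) _ ⟨(hg.1 (lt_add_one _)).le, le_rfl⟩
      rw [sub_add_cancel] at this
      rw [← this, ih]
  have hd_const : ∀ x, d x = d (lam 0) := by
    intro x
    obtain ⟨n, hn⟩ := hg.exists_mem_Ioc x
    rw [hd_cell n x (Ioc_subset_Icc_self hn), hd_grid]
  have := intervalIntegral.integral_interval_sub_left (hG.intervalIntegrable (lam 0) b)
    (hG.intervalIntegrable (lam 0) a)
  have hb := hd_const b
  have ha := hd_const a
  simp only [d] at hb ha
  linear_combination hb - ha + this

theorem GoodSeq.locallyIntegrable_of_integrableOn_Ioc {lam : ℤ → ℝ} {G : ℝ → ℂ}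
    (hg : GoodSeq lam) (hG : ∀ n, IntegrableOn G (Ioc (lam n) (lam (n + 1)))) :
    LocallyIntegrable G volume := by
  intro x
  obtain ⟨n, hn⟩ := hg.exists_mem_Ioc x
  have hnbhd : Ioo (lam n) (lam (n + 1 + 1)) ∈ 𝓝 x :=
    Ioo_mem_nhds hn.1 (hn.2.trans_lt (hg.1 (lt_add_one _)))
  refine ⟨_, hnbhd, ((hG n).union (hG (n + 1))).mono_set ?_⟩
  rw [Ioc_union_Ioc_eq_Ioc (hg.1 (lt_add_one _)).le (hg.1 (lt_add_one _)).le]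
  exact Ioo_subset_Ioc_self

theorem eventuallyEq_restrict_Ioc_of_eqOn_Ioo {G : ℝ → ℂ} {a b : ℝ} {c : ℂ}
    (h : ∀ x ∈ Ioo a b, G x = c) : G =ᵐ[volume.restrict (Ioc a b)] fun _ => c := by
  rw [← Measure.restrict_congr_set Ioo_ae_eq_Ioc]
  exact ae_restrict_of_forall_mem measurableSet_Ioo h

section Interpolant

variable {lam : ℤ → ℝ} {f : ℤ → ℂ} {n : ℤ}

theorem phi1P_eq_add_mul_dd1 (h : lam n < lam (n + 1)) (x : ℝ) :
    phi1P lam f n x = f n + ((x - lam n : ℝ) : ℂ) * dd1 lam f n := by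
  have : ((lam (n + 1) - lam n : ℝ) : ℂ) ≠ 0 := by exact_mod_cast (sub_pos.mpr h).ne'
  rw [phi1P, dd1]
  push_cast at this ⊢
  field_simp
  ring

theorem phi1P_self (h : lam n < lam (n + 1)) : phi1P lam f n (lam n) = f n := by
  simp [phi1P_eq_add_mul_dd1 h]

theorem norm_phi1P_le (h : lam n < lam (n + 1)) {x : ℝ} (hx : x ∈ Icc (lam n) (lam (n + 1))) :
    ‖phi1P lam f n x‖ ≤ max ‖f n‖ ‖f (n + 1)‖ := by
  have hh : 0 < lam (n + 1) - lam n := sub_pos.mpr h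
  have hconv := convex_closedBall (0 : ℂ) (max ‖f n‖ ‖f (n + 1)‖)
    (mem_closedBall_zero_iff.mpr (le_max_left _ _))
    (mem_closedBall_zero_iff.mpr (le_max_right _ _))
    (div_nonneg (sub_nonneg.mpr hx.2) hh.le) (div_nonneg (sub_nonneg.mpr hx.1) hh.le)
    (by field_simp; ring)
  rw [mem_closedBall_zero_iff] at hconv
  simpa only [phi1P, Complex.real_smul, mul_comm] using hconv

end Interpolant

theorem admissibleExt_one_of_eq_phi1P {lam : ℤ → ℝ} {f : ℤ → ℂ} {F G : ℝ → ℂ}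
    (hg : GoodSeq lam)
    (hF : ∀ n x, lam n ≤ x → x ≤ lam (n + 1) → F x = phi1P lam f n x)
    (hG : ∀ n x, lam n < x → x < lam (n + 1) → G x = dd1 lam f n) :
    AdmissibleExt 1 lam f F G := by
  have hlt : ∀ n, lam n < lam (n + 1) := fun n => hg.1 (lt_add_one n)
  have hGae : ∀ n, G =ᵐ[volume.restrict (Ioc (lam n) (lam (n + 1)))] fun _ => dd1 lam f n :=
    fun n => eventuallyEq_restrict_Ioc_of_eqOn_Ioo fun x hx => hG n x hx.1 hx.2
  have hGloc : LocallyIntegrable G volume := hg.locallyIntegrable_of_integrableOn_Ioc fun n =>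
    (integrableOn_const measure_Ioc_lt_top.ne).congr_fun_ae (hGae n).symm
  have hFgrid : ∀ n, F (lam n) = f n := fun n => by
    rw [hF n _ le_rfl (hlt n).le, phi1P_self (hlt n)]
  have hcell : ∀ n, ∀ x ∈ Icc (lam n) (lam (n + 1)),
      F x - F (lam n) = ∫ t in lam n..x, G t := by
    intro n x hx
    rw [hFgrid, hF n x hx.1 hx.2, phi1P_eq_add_mul_dd1 (hlt n),
      intervalIntegral.integral_of_le hx.1,
      integral_congr_ae (ae_restrict_of_ae_restrict_of_subset (Ioc_subset_Ioc_right hx.2) (hGae n)),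
      setIntegral_const, Real.volume_real_Ioc_of_le hx.1, Complex.real_smul, add_sub_cancel_left]
  have hFTC := hg.sub_eq_integral_of_forall_Icc hGloc hcell
  exact admissibleExt_one_iff.mpr ⟨continuous_of_sub_eq_integral hGloc hFTC, hGloc, hFTC, hFgrid⟩

section Estimates

variable {p : ℝ}

theorem ofReal_norm_rpow {E : Type*} [NormedAddCommGroup E] (hp : 0 ≤ p) (x : E) :
    ENNReal.ofReal (‖x‖ ^ p) = ‖x‖ₑ ^ p := by
  rw [← ofReal_norm, ENNReal.ofReal_rpow_of_nonneg (norm_nonneg _) hp]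

theorem lintegral_enorm_rpow_le {α E : Type*} [MeasurableSpace α] [NormedAddCommGroup E]
    {μ : Measure α} {g : α → E} (hg : AEStronglyMeasurable g μ) (hp : 1 ≤ p) :
    (∫⁻ x, ‖g x‖ₑ ∂μ) ^ p ≤ μ univ ^ (p - 1) * ∫⁻ x, ‖g x‖ₑ ^ p ∂μ := by
  have hp0 : 0 < p := one_pos.trans_le hp
  have hHolder := eLpNorm'_le_eLpNorm'_mul_rpow_measure_univ one_pos hp hg
  simp only [eLpNorm', ENNReal.rpow_one, div_one] at hHolder
  calc (∫⁻ x, ‖g x‖ₑ ∂μ) ^ p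
      ≤ ((∫⁻ x, ‖g x‖ₑ ^ p ∂μ) ^ (1 / p) * μ univ ^ (1 - 1 / p)) ^ p :=
        ENNReal.rpow_le_rpow hHolder hp0.le
    _ = μ univ ^ (p - 1) * ∫⁻ x, ‖g x‖ₑ ^ p ∂μ := by
        rw [ENNReal.mul_rpow_of_nonneg _ _ hp0.le, ← ENNReal.rpow_mul, ← ENNReal.rpow_mul,
          one_div_mul_cancel hp0.ne', ENNReal.rpow_one, sub_mul, one_div_mul_cancel hp0.ne',
          one_mul, mul_comm]

theorem ENNReal.rpow_eq_mul_rpow_sub_one (x : ℝ≥0∞) (hp : 1 ≤ p) : x ^ p = x * x ^ (p - 1) := by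
  conv_lhs => rw [← add_sub_cancel 1 p]
  rw [ENNReal.rpow_add_of_nonneg _ _ zero_le_one (sub_nonneg.mpr hp), ENNReal.rpow_one]

theorem measure_mul_rpow_le_of_le_add {α : Type*} [MeasurableSpace α] {μ : Measure α}
    {s : Set α} {φ : α → ℝ≥0∞} {M J : ℝ≥0∞} (h : ∀ x ∈ s, M ≤ φ x + J)
    (hs : MeasurableSet s) (hp : 1 ≤ p) :
    μ s * M ^ p ≤ 2 ^ (p - 1) * (∫⁻ x in s, φ x ^ p ∂μ + μ s * J ^ p) := by
  have hp0 : 0 < p := one_pos.trans_le hp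
  calc μ s * M ^ p = ∫⁻ _ in s, M ^ p ∂μ := by rw [setLIntegral_const, mul_comm]
    _ ≤ ∫⁻ x in s, 2 ^ (p - 1) * (φ x ^ p + J ^ p) ∂μ := by
        refine setLIntegral_mono_ae' hs (ae_of_all _ fun x hx => ?_)
        exact (ENNReal.rpow_le_rpow (h x hx) hp0.le).trans
          (ENNReal.rpow_add_le_mul_rpow_add_rpow _ _ hp)
    _ = 2 ^ (p - 1) * (∫⁻ x in s, φ x ^ p ∂μ + μ s * J ^ p) := by
        rw [lintegral_const_mul' _ _ (by simp), lintegral_add_right _ measurable_const,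
          setLIntegral_const, mul_comm (J ^ p)]

variable {a b : ℝ} {F G : ℝ → ℂ}

theorem enorm_sub_le_lintegral_Ioc (hFG : ∀ a b, F b - F a = ∫ t in a..b, G t) {s t : ℝ}
    (hs : s ∈ Icc a b) (ht : t ∈ Icc a b) :
    ‖F s - F t‖ₑ ≤ ∫⁻ u in Ioc a b, ‖G u‖ₑ := by
  rw [hFG t s, ← ofReal_norm, intervalIntegral.norm_integral_eq_norm_integral_uIoc, ofReal_norm]
  exact (enorm_integral_le_lintegral_enorm _).trans
    (lintegral_mono_set (Ioc_subset_Ioc (le_min ht.1 hs.1) (max_le ht.2 hs.2)))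

/-- A scaled form of the Sobolev embedding `W^1_p ⊂ L^∞` on an interval. -/
theorem measure_mul_enorm_rpow_le (hFG : ∀ a b, F b - F a = ∫ t in a..b, G t)
    (hG : AEStronglyMeasurable G (volume.restrict (Ioc a b))) (hp : 1 ≤ p) {s : ℝ}
    (hs : s ∈ Icc a b) :
    ENNReal.ofReal (b - a) * ‖F s‖ₑ ^ p ≤ 2 ^ (p - 1) *
      ((∫⁻ t in Ioc a b, ‖F t‖ₑ ^ p) +
        ENNReal.ofReal (b - a) ^ p * ∫⁻ t in Ioc a b, ‖G t‖ₑ ^ p) := by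
  have hvol : volume (Ioc a b) = ENNReal.ofReal (b - a) := Real.volume_Ioc
  have hpoint : ∀ t ∈ Ioc a b, ‖F s‖ₑ ≤ ‖F t‖ₑ + ∫⁻ u in Ioc a b, ‖G u‖ₑ := fun t ht =>
    calc ‖F s‖ₑ = ‖F t + (F s - F t)‖ₑ := by rw [add_sub_cancel]
      _ ≤ ‖F t‖ₑ + ‖F s - F t‖ₑ := enorm_add_le _ _
      _ ≤ _ := by gcongr; exact enorm_sub_le_lintegral_Ioc hFG hs (Ioc_subset_Icc_self ht)
  have hJensen := lintegral_enorm_rpow_le hG hp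
  rw [Measure.restrict_apply_univ, hvol] at hJensen
  calc ENNReal.ofReal (b - a) * ‖F s‖ₑ ^ p
      ≤ 2 ^ (p - 1) * ((∫⁻ t in Ioc a b, ‖F t‖ₑ ^ p) +
          ENNReal.ofReal (b - a) * (∫⁻ u in Ioc a b, ‖G u‖ₑ) ^ p) := by
        rw [← hvol]
        exact measure_mul_rpow_le_of_le_add hpoint measurableSet_Ioc hp
    _ ≤ _ := by
        rw [ENNReal.rpow_eq_mul_rpow_sub_one (ENNReal.ofReal (b - a)) hp, mul_assoc]
        gcongr

theorem measure_mul_enorm_rpow_le_of_integral_eq (hab : a < b) {c : ℂ}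
    (hc : ((b - a : ℝ) : ℂ) * c = ∫ t in a..b, G t)
    (hG : AEStronglyMeasurable G (volume.restrict (Ioc a b))) (hp : 1 ≤ p) :
    ENNReal.ofReal (b - a) * ‖c‖ₑ ^ p ≤ ∫⁻ t in Ioc a b, ‖G t‖ₑ ^ p := by
  have hvol : volume (Ioc a b) = ENNReal.ofReal (b - a) := Real.volume_Ioc
  have hh0 : ENNReal.ofReal (b - a) ^ (p - 1) ≠ 0 :=
    (ENNReal.rpow_pos (ENNReal.ofReal_pos.mpr (sub_pos.mpr hab)) ENNReal.ofReal_ne_top).ne'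
  have hhtop : ENNReal.ofReal (b - a) ^ (p - 1) ≠ ⊤ :=
    ENNReal.rpow_ne_top_of_nonneg (sub_nonneg.mpr hp) ENNReal.ofReal_ne_top
  have hmean : ENNReal.ofReal (b - a) * ‖c‖ₑ ≤ ∫⁻ t in Ioc a b, ‖G t‖ₑ := by
    calc ENNReal.ofReal (b - a) * ‖c‖ₑ = ‖((b - a : ℝ) : ℂ) * c‖ₑ := by
          rw [enorm_mul, ← ofReal_norm (((b - a : ℝ) : ℂ)), Complex.norm_real,
            Real.norm_of_nonneg (sub_pos.mpr hab).le]
      _ ≤ ∫⁻ t in Ioc a b, ‖G t‖ₑ := by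
          rw [hc, intervalIntegral.integral_of_le hab.le]
          exact enorm_integral_le_lintegral_enorm _
  have hJensen := lintegral_enorm_rpow_le hG hp
  rw [Measure.restrict_apply_univ, hvol] at hJensen
  rw [← ENNReal.mul_le_mul_iff_right hh0 hhtop]
  calc ENNReal.ofReal (b - a) ^ (p - 1) * (ENNReal.ofReal (b - a) * ‖c‖ₑ ^ p)
      = (ENNReal.ofReal (b - a) * ‖c‖ₑ) ^ p := by
        rw [ENNReal.mul_rpow_of_nonneg _ _ (zero_le_one.trans hp),
          ENNReal.rpow_eq_mul_rpow_sub_one (ENNReal.ofReal (b - a)) hp]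
        ring
    _ ≤ (∫⁻ t in Ioc a b, ‖G t‖ₑ) ^ p := ENNReal.rpow_le_rpow hmean (zero_le_one.trans hp)
    _ ≤ _ := hJensen

end Estimates

theorem ENNReal.two_rpow_mul_rpow_add_one_le {p : ℝ} (hp : 1 ≤ p) (x : ℝ≥0∞) :
    2 ^ p * x ^ p + 1 ≤ (2 * (x + 1)) ^ p := by
  have hp0 : 0 ≤ p := zero_le_one.trans hp
  calc 2 ^ p * x ^ p + 1 ≤ 2 ^ p * x ^ p + 2 ^ p * 1 ^ p := by
        rw [ENNReal.one_rpow, mul_one]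
        gcongr
        exact ENNReal.one_le_rpow (by norm_num) (one_pos.trans_le hp)
    _ ≤ 2 ^ p * (x + 1) ^ p := by
        rw [← mul_add]
        gcongr
        exact ENNReal.add_rpow_le_rpow_add _ _ hp
    _ = (2 * (x + 1)) ^ p := (ENNReal.mul_rpow_of_nonneg _ _ hp0).symm

section Cell

variable {lam : ℤ → ℝ} {f : ℤ → ℂ} {F G F' G' : ℝ → ℂ} {p K : ℝ} {n : ℤ}

theorem enorm_rpow_phi1P_le (h : lam n < lam (n + 1)) (hp : 0 ≤ p) {x : ℝ}
    (hx : x ∈ Icc (lam n) (lam (n + 1))) :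
    ‖phi1P lam f n x‖ₑ ^ p ≤ ‖f n‖ₑ ^ p + ‖f (n + 1)‖ₑ ^ p := by
  rcases le_max_iff.mp (norm_phi1P_le (f := f) h hx) with hle | hle
  · exact (ENNReal.rpow_le_rpow (enorm_le_iff_norm_le.mpr hle) hp).trans le_self_add
  · exact (ENNReal.rpow_le_rpow (enorm_le_iff_norm_le.mpr hle) hp).trans le_add_self

theorem lintegral_Ioc_interp_le (hlt : lam n < lam (n + 1)) (hstep : lam (n + 1) - lam n ≤ K)
    (hF : ∀ x ∈ Icc (lam n) (lam (n + 1)), F x = phi1P lam f n x)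
    (hG : G =ᵐ[volume.restrict (Ioc (lam n) (lam (n + 1)))] fun _ => dd1 lam f n)
    (hadm : AdmissibleExt 1 lam f F' G') (hp : 1 ≤ p) :
    (∫⁻ t in Ioc (lam n) (lam (n + 1)), ‖F t‖ₑ ^ p) +
        ∫⁻ t in Ioc (lam n) (lam (n + 1)), ‖G t‖ₑ ^ p ≤
      (2 * (ENNReal.ofReal K + 1)) ^ p * ((∫⁻ t in Ioc (lam n) (lam (n + 1)), ‖F' t‖ₑ ^ p) +
        ∫⁻ t in Ioc (lam n) (lam (n + 1)), ‖G' t‖ₑ ^ p) := by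
  obtain ⟨-, hG'loc, hFTC, hgrid⟩ := admissibleExt_one_iff.mp hadm
  set I := Ioc (lam n) (lam (n + 1))
  set h := ENNReal.ofReal (lam (n + 1) - lam n)
  set PF := ∫⁻ t in I, ‖F' t‖ₑ ^ p
  set PG := ∫⁻ t in I, ‖G' t‖ₑ ^ p
  have hp0 : 0 ≤ p := zero_le_one.trans hp
  have hvol : volume I = h := Real.volume_Ioc
  have hG'I : AEStronglyMeasurable G' (volume.restrict I) := hG'loc.aestronglyMeasurable.restrict
  have hsup : ∀ s ∈ Icc (lam n) (lam (n + 1)),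
      h * ‖F' s‖ₑ ^ p ≤ 2 ^ (p - 1) * (PF + h ^ p * PG) :=
    fun s hs => measure_mul_enorm_rpow_le hFTC hG'I hp hs
  have hFpart : ∫⁻ t in I, ‖F t‖ₑ ^ p ≤ 2 ^ p * (PF + h ^ p * PG) :=
    calc ∫⁻ t in I, ‖F t‖ₑ ^ p ≤ ∫⁻ _ in I, (‖f n‖ₑ ^ p + ‖f (n + 1)‖ₑ ^ p) := by
          refine setLIntegral_mono' measurableSet_Ioc fun x hx => ?_
          rw [hF x (Ioc_subset_Icc_self hx)]
          exact enorm_rpow_phi1P_le hlt hp0 (Ioc_subset_Icc_self hx)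
      _ = h * ‖F' (lam n)‖ₑ ^ p + h * ‖F' (lam (n + 1))‖ₑ ^ p := by
          rw [setLIntegral_const, hvol, hgrid, hgrid, mul_comm, mul_add]
      _ ≤ 2 ^ (p - 1) * (PF + h ^ p * PG) + 2 ^ (p - 1) * (PF + h ^ p * PG) :=
          add_le_add (hsup _ (left_mem_Icc.mpr hlt.le)) (hsup _ (right_mem_Icc.mpr hlt.le))
      _ = 2 ^ p * (PF + h ^ p * PG) := by
          rw [← two_mul, ← mul_assoc, ← ENNReal.rpow_eq_mul_rpow_sub_one 2 hp]
  have hGpart : ∫⁻ t in I, ‖G t‖ₑ ^ p ≤ PG := by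
    rw [lintegral_congr_ae (hG.mono fun x hx =>
      show ‖G x‖ₑ ^ p = ‖dd1 lam f n‖ₑ ^ p by rw [hx]), setLIntegral_const, hvol, mul_comm]
    refine measure_mul_enorm_rpow_le_of_integral_eq hlt ?_ hG'I hp
    rw [← hFTC, hgrid, hgrid, dd1]
    exact mul_div_cancel₀ _ (by exact_mod_cast (sub_pos.mpr hlt).ne')
  have hhK : h ≤ ENNReal.ofReal K := ENNReal.ofReal_le_ofReal hstep
  calc (∫⁻ t in I, ‖F t‖ₑ ^ p) + ∫⁻ t in I, ‖G t‖ₑ ^ p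
      ≤ 2 ^ p * PF + (2 ^ p * h ^ p + 1) * PG := by
        calc _ ≤ 2 ^ p * (PF + h ^ p * PG) + PG := add_le_add hFpart hGpart
          _ = _ := by ring
    _ ≤ (2 * (ENNReal.ofReal K + 1)) ^ p * PF + (2 * (ENNReal.ofReal K + 1)) ^ p * PG := by
        gcongr
        · exact le_mul_of_one_le_right' le_add_self
        · exact (ENNReal.two_rpow_mul_rpow_add_one_le hp h).trans (by gcongr)
    _ = _ := (mul_add _ _ _).symm

end Cell

theorem GoodSeq.lintegral_interp_le {lam : ℤ → ℝ} {f : ℤ → ℂ} {F G F' G' : ℝ → ℂ} {p K : ℝ}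
    (hg : GoodSeq lam) (hstep : ∀ n, lam (n + 1) - lam n ≤ K)
    (hF : ∀ n x, lam n ≤ x → x ≤ lam (n + 1) → F x = phi1P lam f n x)
    (hG : ∀ n x, lam n < x → x < lam (n + 1) → G x = dd1 lam f n)
    (hadm : AdmissibleExt 1 lam f F' G') (hp : 1 ≤ p) :
    (∫⁻ t, ‖F t‖ₑ ^ p) + ∫⁻ t, ‖G t‖ₑ ^ p ≤
      (2 * (ENNReal.ofReal K + 1)) ^ p * ((∫⁻ t, ‖F' t‖ₑ ^ p) + ∫⁻ t, ‖G' t‖ₑ ^ p) := by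
  rw [hg.lintegral_eq_tsum fun t => ‖F t‖ₑ ^ p, hg.lintegral_eq_tsum fun t => ‖G t‖ₑ ^ p,
    hg.lintegral_eq_tsum fun t => ‖F' t‖ₑ ^ p, hg.lintegral_eq_tsum fun t => ‖G' t‖ₑ ^ p]
  rw [← ENNReal.tsum_add, ← ENNReal.tsum_add, ← ENNReal.tsum_mul_left]
  refine ENNReal.tsum_le_tsum fun n => lintegral_Ioc_interp_le (hg.1 (lt_add_one n)) (hstep n)
    (fun x hx => hF n x hx.1 hx.2)
    (eventuallyEq_restrict_Ioc_of_eqOn_Ioo fun x hx => hG n x hx.1 hx.2) hadm hp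

theorem le_mul_traceW_of_forall {r : ℕ} {p : ℝ} {lam : ℤ → ℝ} {f : ℤ → ℂ} {X c : ℝ≥0∞}
    (hc0 : c ≠ 0) (hc : c ≠ ⊤)
    (h : ∀ F G, AdmissibleExt r lam f F G →
      X ≤ c * ((∫⁻ t, ENNReal.ofReal (‖F t‖ ^ p)) + ∫⁻ t, ENNReal.ofReal (‖G t‖ ^ p)) ^ (1 / p)) :
    X ≤ c * traceW r p lam f := by
  simp only [traceW, ENNReal.mul_iInf_of_ne hc0 hc]
  exact le_iInf fun F => le_iInf fun G => le_iInf (h F G)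

theorem ENNReal.rpow_one_div_le_mul_of_le_rpow_mul {X Y c : ℝ≥0∞} {p : ℝ} (hp : 0 < p)
    (h : X ≤ c ^ p * Y) : X ^ (1 / p) ≤ c * Y ^ (1 / p) := by
  calc X ^ (1 / p) ≤ (c ^ p * Y) ^ (1 / p) := ENNReal.rpow_le_rpow h (by positivity)
    _ = c * Y ^ (1 / p) := by
        rw [ENNReal.mul_rpow_of_nonneg _ _ (by positivity), ← ENNReal.rpow_mul,
          mul_one_div_cancel hp.ne', ENNReal.rpow_one]

/-- for every `K > 0` there is `C` (depending only on `K`) such that for every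
`f` with finite `W^1_p` trace norm, `Φ₁ f` is an admissible 1-extension of `f` with a.e.
derivative `G(x) = f[λ_n,λ_{n+1}]` on `(λ_n,λ_{n+1})`, and
`(∫|Φ₁f|^p + ∫|G|^p)^{1/p} ≤ C ‖f‖_{W^1_p|Λ}`. -/
theorem stmt6 (K : ℝ) (hK : 0 < K) :
    ∃ C : ℝ, 0 < C ∧
      ∀ p : ℝ, 1 ≤ p → ∀ lam : ℤ → ℝ, GoodSeq lam →
        (∀ n : ℤ, lam (n + 1) - lam n ≤ K) → ∀ f : ℤ → ℂ,
        traceW 1 p lam f < ⊤ →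
        ∀ F G : ℝ → ℂ,
          (∀ n : ℤ, ∀ x : ℝ, lam n ≤ x → x ≤ lam (n + 1) → F x = phi1P lam f n x) →
          (∀ n : ℤ, ∀ x : ℝ, lam n < x → x < lam (n + 1) → G x = dd1 lam f n) →
          AdmissibleExt 1 lam f F G ∧
          ((∫⁻ t, ENNReal.ofReal (‖F t‖ ^ p)) +
              ∫⁻ t, ENNReal.ofReal (‖G t‖ ^ p)) ^ (1 / p) ≤
            ENNReal.ofReal C * traceW 1 p lam f := by
  refine ⟨2 * (K + 1), by positivity, fun p hp lam hg hstep f _ F G hF hG =>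
    ⟨admissibleExt_one_of_eq_phi1P hg hF hG, ?_⟩⟩
  have hC : ENNReal.ofReal (2 * (K + 1)) = 2 * (ENNReal.ofReal K + 1) := by
    rw [ENNReal.ofReal_mul zero_le_two, ENNReal.ofReal_add hK.le zero_le_one]
    simp
  refine le_mul_traceW_of_forall (by positivity) ENNReal.ofReal_ne_top fun F' G' hadm => ?_
  simp only [ofReal_norm_rpow (zero_le_one.trans hp), hC]
  exact ENNReal.rpow_one_div_le_mul_of_le_rpow_mul (one_pos.trans_le hp)
    (hg.lintegral_interp_le hstep hF hG hadm hp)
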